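/- arXiv:2411.00434 — 4 statements merged into one kernel-verified Lean document; each statement's English description precedes it below -/
import Mathlib

section
/- The Fermi-Dirac function f(x) = 1/(e^{βx}+1), extended to complex z with |Im z| ≤ 2/β and |Re z| ≤ 2, is bounded in absolute value by 1/sin(π−2) < 1.1. -/
/-!
Put `w = βz`, so `|Im w| ≤ 2`. Writing `e^w = r e^{iy}`, one has
`|e^w + 1|² = (r + cos y)² + sin² y`. Hence `|e^w + 1| ≥ 1` when `cos y ≥ 0`, and otherwise
`|y| ∈ [π/2, 2]`, so `|e^w + 1| ≥ |sin y| ≥ sin (π - 2)`.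
-/

open Real

theorem Real.sin_pi_sub_le_abs_sin {θ y : ℝ} (hy : |y| ≤ θ) (hθ : θ ≤ π)
    (hcos : cos y ≤ 0) :
    sin (π - θ) ≤ |sin y| := by
  have hyπ : |y| ≤ π := hy.trans hθ
  have hy_ge : π / 2 ≤ |y| := by
    by_contra! h
    have : 0 < cos |y| := cos_pos_of_mem_Ioo ⟨by linarith [abs_nonneg y], h⟩
    linarith [cos_abs y]
  rw [abs_sin_eq_sin_abs_of_abs_le_pi hyπ, ← sin_pi_sub |y|]
  exact strictMonoOn_sin.monotoneOn ⟨by linarith, by linarith⟩ ⟨by linarith, by linarith⟩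
    (by linarith)

namespace Complex

theorem normSq_exp_add_one (w : ℂ) :
    normSq (exp w + 1) = (Real.exp w.re + Real.cos w.im) ^ 2 + Real.sin w.im ^ 2 := by
  simp only [normSq_apply, add_re, add_im, exp_re, exp_im, one_re, one_im]
  linear_combination (Real.exp w.re ^ 2 - 1) * Real.sin_sq_add_cos_sq w.im

theorem abs_sin_im_le_norm_exp_add_one (w : ℂ) : |Real.sin w.im| ≤ ‖exp w + 1‖ := by
  rw [← Real.sqrt_sq_eq_abs, norm_def, normSq_exp_add_one]
  exact Real.sqrt_le_sqrt (le_add_of_nonneg_left (sq_nonneg _))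

theorem one_le_norm_exp_add_one_of_cos_im_nonneg (w : ℂ) (hw : 0 ≤ Real.cos w.im) :
    1 ≤ ‖exp w + 1‖ := by
  rw [← Real.sqrt_one, norm_def, normSq_exp_add_one]
  refine Real.sqrt_le_sqrt ?_
  nlinarith [Real.sin_sq_add_cos_sq w.im, mul_nonneg (Real.exp_pos w.re).le hw,
    sq_nonneg (Real.exp w.re)]

theorem sin_pi_sub_le_norm_exp_add_one {w : ℂ} {θ : ℝ} (hw : |w.im| ≤ θ) (hθ : θ ≤ π) :
    Real.sin (π - θ) ≤ ‖exp w + 1‖ := by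
  rcases le_or_gt 0 (Real.cos w.im) with hcos | hcos
  · exact (Real.sin_le_one _).trans (one_le_norm_exp_add_one_of_cos_im_nonneg w hcos)
  · exact (Real.sin_pi_sub_le_abs_sin hw hθ hcos.le).trans (abs_sin_im_le_norm_exp_add_one w)

end Complex

theorem fermi_dirac_complex_bound_general (β : ℝ) (hβ : 0 < β) (z : ℂ)
    (him : β * |z.im| ≤ 2) :
    ‖1 / (Complex.exp (β * z) + 1)‖ ≤ 1 / Real.sin (π - 2) := by
  have hπ : (2 : ℝ) < π := by linarith [pi_gt_three]
  have hsin : 0 < Real.sin (π - 2) := sin_pos_of_pos_of_lt_pi (by linarith) (by linarith)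
  have hw : |((β : ℂ) * z).im| ≤ 2 := by
    rwa [Complex.im_ofReal_mul, abs_mul, abs_of_pos hβ]
  rw [norm_div, norm_one]
  exact one_div_le_one_div_of_le hsin
    (Complex.sin_pi_sub_le_norm_exp_add_one hw hπ.le)

/-- The Fermi–Dirac function `f(z) = 1/(e^{βz}+1)`, extended to complex `z` with
`|Im z| ≤ 2/β` and `|Re z| ≤ 2`, is bounded in absolute value by `1/sin(π−2)`. -/
theorem fermi_dirac_complex_bound (β : ℝ) (hβ : 0 < β) (z : ℂ)
    (him : β * |z.im| ≤ 2) (hre : |z.re| ≤ 2) :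
    ‖1 / (Complex.exp (β * z) + 1)‖ ≤ 1 / Real.sin (π - 2) :=
  fermi_dirac_complex_bound_general β hβ z him
end

section
/- The Chebyshev coefficients of the simple-pole function x ↦ η/((ω+iη) − x) are a_k = πη / (√((ω+iη)²−1) · (ω+iη ± √((ω+iη)²−1))^k), where the sign is chosen so the base has modulus > 1. -/
/-!
Substituting `x = cos θ` turns the coefficient into `η ∫₀^π T_k(cos θ) / (w - cos θ) dθ`.
Writing `2 x = 2 w - 2 (w - x)` in the recurrence `T_{k+2} = 2 x T_{k+1} - T_k` and using
`∫₀^π T_{k+1}(cos θ) dθ = 0` shows that these integrals satisfy `a_{k+2} = 2 w a_{k+1} - a_k`,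
and `a_1 = w a_0 - π = a_0 / r` because `r + r⁻¹ = 2 w`; hence `a_k = a_0 / r^k`.
Finally `2 r (w - cos θ) = (r - e^{iθ}) (r - e^{-iθ})`, so partial fractions give a logarithmic
primitive of `(w - cos θ)⁻¹` and `a_0 = π / (r - w)`.
-/

open Real intervalIntegral

open Set Polynomial Polynomial.Chebyshev

theorem integral_inv_sqrt_one_sub_sq_smul_eq_integral_cos {E : Type*} [NormedAddCommGroup E]
    [NormedSpace ℝ E] (f : ℝ → E) :
    ∫ x in -1..1, (√(1 - x ^ 2))⁻¹ • f x = ∫ θ in 0..π, f (cos θ) := calc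
  ∫ x in -1..1, (√(1 - x ^ 2))⁻¹ • f x
      = ∫ x in 1..-1, (-(1 / √(1 - x ^ 2))) • ((fun θ => f (cos θ)) ∘ arccos) x := by
    rw [integral_symm, ← intervalIntegral.integral_neg]
    refine integral_congr fun x hx => ?_
    rw [uIcc_of_ge (by norm_num)] at hx
    simp [cos_arccos hx.1 hx.2]
  _ = ∫ θ in 0..π, f (cos θ) := by
    rw [integral_deriv_smul_comp_of_deriv_nonpos continuous_arccos.continuousOn
      (fun x hx => hasDerivAt_arccos (by aesop) (by aesop)) (fun x _ => by simp)]
    simp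

section Joukowski

variable {w r : ℂ}

theorem two_mul_mul_sub_cos_eq (hroot : r ^ 2 - 2 * w * r + 1 = 0) (θ : ℝ) :
    2 * r * (w - cos θ) =
      (r - Complex.exp (θ * Complex.I)) * (r - Complex.exp (θ * -Complex.I)) := by
  have hprod : Complex.exp (θ * Complex.I) * Complex.exp (θ * -Complex.I) = 1 := by
    rw [← Complex.exp_add]; simp
  rw [Complex.ofReal_cos, Complex.cos, neg_mul, ← mul_neg]
  linear_combination -hroot - hprod

theorem exp_ofReal_mul_ne_of_re_eq_zero (hr : 1 < ‖r‖) {c : ℂ} (hc : c.re = 0) (θ : ℝ) :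
    Complex.exp (θ * c) ≠ r := by
  rintro rfl
  rw [Complex.norm_exp] at hr
  simp [hc] at hr

theorem sub_cos_ne_zero (hroot : r ^ 2 - 2 * w * r + 1 = 0) (hr : 1 < ‖r‖) (θ : ℝ) :
    w - cos θ ≠ 0 := by
  refine right_ne_zero_of_mul (a := 2 * r) ?_
  rw [two_mul_mul_sub_cos_eq hroot]
  exact mul_ne_zero (sub_ne_zero.mpr (exp_ofReal_mul_ne_of_re_eq_zero hr (by simp) θ).symm)
    (sub_ne_zero.mpr (exp_ofReal_mul_ne_of_re_eq_zero hr (by simp) θ).symm)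

theorem sub_ne_zero_of_sq_sub_two_mul_add_one_eq_zero (hroot : r ^ 2 - 2 * w * r + 1 = 0)
    (hr : 1 < ‖r‖) : r - w ≠ 0 := by
  have hsq : r ^ 2 - 1 ≠ 0 := by
    intro h
    have : ‖r‖ ^ 2 = 1 := by rw [← norm_pow, sub_eq_zero.mp h, norm_one]
    nlinarith
  refine right_ne_zero_of_mul (a := 2 * r) ?_
  convert hsq using 1
  linear_combination hroot

theorem hasDerivAt_log_one_sub_exp_mul_div (hr : 1 < ‖r‖) {c : ℂ} (hc : c.re = 0) (θ : ℝ) :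
    HasDerivAt (fun t : ℝ => Complex.log (1 - Complex.exp (t * c) / r))
      (c * Complex.exp (θ * c) / (Complex.exp (θ * c) - r)) θ := by
  have hr0 : r ≠ 0 := norm_pos_iff.mp (zero_lt_one.trans hr)
  have hslit : 1 - Complex.exp (θ * c) / r ∈ Complex.slitPlane := by
    rw [sub_eq_add_neg]
    refine Complex.mem_slitPlane_of_norm_lt_one ?_
    rw [norm_neg, norm_div, Complex.norm_exp]
    simpa [hc] using inv_lt_one_of_one_lt₀ hr
  have hexp := (((hasDerivAt_id' (θ : ℂ)).mul_const c).cexp).comp_ofReal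
  convert ((hexp.div_const r).const_sub 1).clog_real hslit using 1
  rw [one_sub_div hr0, ← neg_div, div_div_div_cancel_right₀ hr0, ← neg_sub, div_neg, neg_div,
    one_mul, mul_comm]

/-- Both logarithms stay on the principal branch because `|e^{±iθ} / r| < 1`. -/
noncomputable def inverseSubCosPrimitive (w r : ℂ) (θ : ℝ) : ℂ :=
  (θ + Complex.I * Complex.log (1 - Complex.exp (θ * Complex.I) / r)
    - Complex.I * Complex.log (1 - Complex.exp (θ * -Complex.I) / r)) / (r - w)

theorem hasDerivAt_inverseSubCosPrimitive (hroot : r ^ 2 - 2 * w * r + 1 = 0) (hr : 1 < ‖r‖)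
    (θ : ℝ) : HasDerivAt (inverseSubCosPrimitive w r) (w - cos θ)⁻¹ θ := by
  have hlogI := hasDerivAt_log_one_sub_exp_mul_div hr (c := Complex.I) (by simp) θ
  have hlogNegI := hasDerivAt_log_one_sub_exp_mul_div hr (c := -Complex.I) (by simp) θ
  have hid : HasDerivAt (fun t : ℝ => (t : ℂ)) 1 θ := (hasDerivAt_id θ).ofReal_comp
  refine (((hid.add (hlogI.const_mul Complex.I)).sub (hlogNegI.const_mul Complex.I)).div_const
    (r - w)).congr_deriv ?_
  have hr0 : r ≠ 0 := by rintro rfl; simp at hroot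
  have hrw := sub_ne_zero_of_sq_sub_two_mul_add_one_eq_zero hroot hr
  have hcos : w - cos θ =
      (r - Complex.exp (θ * Complex.I)) * (r - Complex.exp (θ * -Complex.I)) / (2 * r) := by
    rw [eq_div_iff (by simpa using hr0), mul_comm, two_mul_mul_sub_cos_eq hroot]
  have hz := exp_ofReal_mul_ne_of_re_eq_zero hr (c := Complex.I) (by simp) θ
  have hz' := exp_ofReal_mul_ne_of_re_eq_zero hr (c := -Complex.I) (by simp) θ
  have hprod : Complex.exp (θ * Complex.I) * Complex.exp (θ * -Complex.I) = 1 := by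
    rw [← Complex.exp_add]; simp
  apply eq_inv_of_mul_eq_one_left
  rw [hcos]
  generalize Complex.exp (θ * Complex.I) = z at *
  generalize Complex.exp (θ * -Complex.I) = z' at *
  have hzr := sub_ne_zero.mpr hz
  have hz'r := sub_ne_zero.mpr hz'
  field_simp
  rw [Complex.I_sq]
  linear_combination (-((r - z) * (r - z'))) * hroot - (r - z) * (r - z') * hprod

theorem integral_inv_sub_cos (hroot : r ^ 2 - 2 * w * r + 1 = 0) (hr : 1 < ‖r‖) :
    ∫ θ in 0..π, (w - cos θ)⁻¹ = π / (r - w) := by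
  have hcont : Continuous fun θ : ℝ => (w - cos θ)⁻¹ :=
    (continuous_const.sub (Complex.continuous_ofReal.comp continuous_cos)).inv₀
      (sub_cos_ne_zero hroot hr)
  rw [integral_eq_sub_of_hasDerivAt (fun θ _ => hasDerivAt_inverseSubCosPrimitive hroot hr θ)
    (hcont.intervalIntegrable _ _)]
  simp [inverseSubCosPrimitive, Complex.exp_pi_mul_I]

end Joukowski

theorem integral_eval_T_real_cos_of_ne_zero {n : ℤ} (hn : n ≠ 0) :
    ∫ θ in 0..π, (T ℝ n).eval (cos θ) = 0 :=
  integral_measureT_eq_integral_cos.symm.trans (integral_eval_T_real_measureT_of_ne_zero hn)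

theorem eq_div_pow_of_add_two_eq {K : Type*} [Field K] {w r : K} {a : ℕ → K}
    (hroot : r ^ 2 - 2 * w * r + 1 = 0) (h₁ : a 1 = a 0 / r)
    (hrec : ∀ k, a (k + 2) = 2 * w * a (k + 1) - a k) (k : ℕ) : a k = a 0 / r ^ k := by
  have hr0 : r ≠ 0 := by rintro rfl; simp at hroot
  induction k using Nat.twoStepInduction with
  | zero => simp
  | one => simpa using h₁
  | more k ih₀ ih₁ =>
    rw [hrec, ih₀, ih₁, pow_succ, pow_succ, pow_succ]
    field_simp
    linear_combination -(a 0) * hroot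

noncomputable def chebyshevCoeffInvSub (w : ℂ) (k : ℕ) : ℂ :=
  ∫ θ in 0..π, (((T ℝ k).eval (cos θ) : ℝ) : ℂ) * (w - cos θ)⁻¹

section ChebyshevCoeffInvSub

variable {w : ℂ}

theorem intervalIntegrable_eval_T_real_cos_mul_inv_sub_cos (hw : ∀ θ : ℝ, w - cos θ ≠ 0)
    (n : ℤ) (a b : ℝ) :
    IntervalIntegrable (fun θ : ℝ => (((T ℝ n).eval (cos θ) : ℝ) : ℂ) * (w - cos θ)⁻¹)
      MeasureTheory.volume a b := by
  have := (continuous_const.sub (Complex.continuous_ofReal.comp continuous_cos)).inv₀ hw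
  exact Continuous.intervalIntegrable (by fun_prop) a b

theorem chebyshevCoeffInvSub_one (hw : ∀ θ : ℝ, w - cos θ ≠ 0) :
    chebyshevCoeffInvSub w 1 = w * chebyshevCoeffInvSub w 0 - π := by
  have hpt : ∀ θ : ℝ, (((T ℝ (1 : ℕ)).eval (cos θ) : ℝ) : ℂ) * (w - cos θ)⁻¹ =
      w * ((((T ℝ (0 : ℕ)).eval (cos θ) : ℝ) : ℂ) * (w - cos θ)⁻¹) - 1 := fun θ => by
    have hwθ := hw θ
    generalize cos θ = x at hwθ ⊢
    simp only [Nat.cast_one, Nat.cast_zero, T_one, T_zero, eval_X, eval_one, Complex.ofReal_one]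
    field_simp
    ring
  rw [chebyshevCoeffInvSub, integral_congr fun θ _ => hpt θ,
    intervalIntegral.integral_sub
      ((intervalIntegrable_eval_T_real_cos_mul_inv_sub_cos hw _ _ _).const_mul _)
      intervalIntegrable_const,
    integral_const_mul]
  simp [chebyshevCoeffInvSub]

theorem chebyshevCoeffInvSub_add_two (hw : ∀ θ : ℝ, w - cos θ ≠ 0) (k : ℕ) :
    chebyshevCoeffInvSub w (k + 2) =
      2 * w * chebyshevCoeffInvSub w (k + 1) - chebyshevCoeffInvSub w k := by
  have hT : ∀ x : ℝ, (T ℝ (k + 2 : ℕ)).eval x =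
      2 * x * (T ℝ (k + 1 : ℕ)).eval x - (T ℝ k).eval x := fun x => by
    push_cast
    rw [T_add_two]
    simp
  have hpt : ∀ θ : ℝ, (((T ℝ (k + 2 : ℕ)).eval (cos θ) : ℝ) : ℂ) * (w - cos θ)⁻¹ =
      2 * w * ((((T ℝ (k + 1 : ℕ)).eval (cos θ) : ℝ) : ℂ) * (w - cos θ)⁻¹)
        - (((T ℝ k).eval (cos θ) : ℝ) : ℂ) * (w - cos θ)⁻¹
        - 2 * (((T ℝ (k + 1 : ℕ)).eval (cos θ) : ℝ) : ℂ) := fun θ => by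
    have hwθ := hw θ
    generalize cos θ = x at hwθ ⊢
    rw [hT]
    push_cast
    field_simp
    ring
  have hint := intervalIntegrable_eval_T_real_cos_mul_inv_sub_cos hw (a := 0) (b := π)
  have hTint : IntervalIntegrable (fun θ : ℝ => 2 * (((T ℝ (k + 1 : ℕ)).eval (cos θ) : ℝ) : ℂ))
      MeasureTheory.volume 0 π := Continuous.intervalIntegrable (by fun_prop) _ _
  rw [chebyshevCoeffInvSub, integral_congr fun θ _ => hpt θ,
    intervalIntegral.integral_sub (((hint _).const_mul _).sub (hint _)) hTint,
    intervalIntegral.integral_sub ((hint _).const_mul _) (hint _),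
    integral_const_mul, integral_const_mul, intervalIntegral.integral_ofReal,
    integral_eval_T_real_cos_of_ne_zero (by omega)]
  simp [chebyshevCoeffInvSub]

theorem chebyshevCoeffInvSub_eq {r : ℂ} (hroot : r ^ 2 - 2 * w * r + 1 = 0) (hr : 1 < ‖r‖)
    (k : ℕ) : chebyshevCoeffInvSub w k = π / ((r - w) * r ^ k) := by
  have hw := sub_cos_ne_zero hroot hr
  have h₀ : chebyshevCoeffInvSub w 0 = π / (r - w) := by
    simpa [chebyshevCoeffInvSub] using integral_inv_sub_cos hroot hr
  have hrw := sub_ne_zero_of_sq_sub_two_mul_add_one_eq_zero hroot hr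
  have hr0 : r ≠ 0 := by rintro rfl; simp at hroot
  have h₁ : chebyshevCoeffInvSub w 1 = chebyshevCoeffInvSub w 0 / r := by
    rw [chebyshevCoeffInvSub_one hw, h₀]
    field_simp
    linear_combination -hroot
  rw [eq_div_pow_of_add_two_eq hroot h₁ (chebyshevCoeffInvSub_add_two hw) k, h₀, div_div]

end ChebyshevCoeffInvSub

/-- Here `r - w` is the branch of `√(w² - 1)` determined by `r`: `(r - w)² = w² - 1`. -/
theorem chebyshev_coeff_simple_pole_general (η : ℝ) (k : ℕ) (w r : ℂ)
    (hroot : r ^ 2 - 2 * w * r + 1 = 0) (hr : 1 < ‖r‖) :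
    (∫ x in (-1 : ℝ)..1,
        (((Polynomial.Chebyshev.T ℝ k).eval x / Real.sqrt (1 - x ^ 2) : ℝ) : ℂ) *
          ((η : ℂ) / (w - (x : ℂ)))) =
      (π : ℂ) * η / ((r - w) * r ^ k) := by
  have hpt : ∀ x : ℝ, (((T ℝ k).eval x / √(1 - x ^ 2) : ℝ) : ℂ) * ((η : ℂ) / (w - x)) =
      (√(1 - x ^ 2))⁻¹ • ((η : ℂ) * ((((T ℝ k).eval x : ℝ) : ℂ) * (w - x)⁻¹)) := fun x => by
    rw [Complex.real_smul]
    push_cast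
    ring
  rw [integral_congr fun x _ => hpt x, integral_inv_sqrt_one_sub_sq_smul_eq_integral_cos,
    integral_const_mul, ← chebyshevCoeffInvSub, chebyshevCoeffInvSub_eq hroot hr,
    mul_div_left_comm, ← mul_div_assoc]

/-- Chebyshev coefficients of the simple-pole function `x ↦ η/((ω+iη) − x)`:
`a_k = ∫_{−1}^1 T_k(x)/√(1−x²) · η/(w−x) dx = πη/(√(w²−1)·r^k)`, where `w = ω+iη`,
`r = w + √(w²−1)` is the root of `z²−2wz+1=0` with `|r| > 1`, and the branch of the
square root consistent with `r` is `√(w²−1) = r − w`. -/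
theorem chebyshev_coeff_simple_pole (ω η : ℝ) (hη : 0 < η) (k : ℕ) (w r : ℂ)
    (hw : w = (ω : ℂ) + η * Complex.I)
    (hroot : r ^ 2 - 2 * w * r + 1 = 0) (hr : 1 < ‖r‖) :
    (∫ x in (-1 : ℝ)..1,
        (((Polynomial.Chebyshev.T ℝ k).eval x / Real.sqrt (1 - x ^ 2) : ℝ) : ℂ) *
          ((η : ℂ) / (w - (x : ℂ)))) =
      (π : ℂ) * η / ((r - w) * r ^ k) :=
  chebyshev_coeff_simple_pole_general η k w r hroot hr
end

section
/- For ω ∈ ℝ and η > 0, the root r = ω + iη + √((ω+iη)²−1) of z² − 2(ω+iη)z + 1 = 0 with larger modulus satisfies |r| ≥ 1 + η. -/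
/-!
Multiplying `r² − 2wr + 1 = 0` by `r̄` gives `‖r‖² r − 2‖r‖² w + r̄ = 0`, whose imaginary part is
`Im r · (‖r‖² − 1) = 2 Im w · ‖r‖²`. With `Im r ≤ ‖r‖` and `‖r‖ ≥ 1` this yields
`‖r‖² − 1 ≥ 2η‖r‖`, and `‖r‖ + 1 ≤ 2‖r‖` turns that into `‖r‖ − 1 ≥ η`.
-/

theorem Complex.im_mul_sq_norm_sub_one_of_sq_sub_two_mul_add_one {w r : ℂ}
    (hroot : r ^ 2 - 2 * w * r + 1 = 0) :
    r.im * (‖r‖ ^ 2 - 1) = 2 * w.im * ‖r‖ ^ 2 := by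
  have hconj : ((‖r‖ ^ 2 : ℝ) : ℂ) * (r - 2 * w) + starRingEnd ℂ r = 0 := by
    rw [Complex.sq_norm, Complex.normSq_eq_conj_mul_self]
    linear_combination starRingEnd ℂ r * hroot
  have him := congrArg Complex.im hconj
  simp only [Complex.add_im, Complex.sub_im, Complex.mul_im, Complex.ofReal_re, Complex.ofReal_im,
    Complex.re_ofNat, Complex.im_ofNat, zero_mul, add_zero, Complex.conj_im, Complex.zero_im] at him
  linear_combination him

theorem one_add_le_of_mul_sq_sub_one_eq {b s η : ℝ} (hs : 1 ≤ s) (hbs : b ≤ s)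
    (h : b * (s ^ 2 - 1) = 2 * η * s ^ 2) : 1 + η ≤ s := by
  have hs0 : 0 < s := by linarith
  have hgap : 2 * η * s ≤ s ^ 2 - 1 := by
    refine le_of_mul_le_mul_right ?_ hs0
    calc 2 * η * s * s = b * (s ^ 2 - 1) := by rw [h]; ring
      _ ≤ s * (s ^ 2 - 1) := by gcongr; nlinarith
      _ = (s ^ 2 - 1) * s := by ring
  nlinarith

theorem pole_root_modulus_lower_bound_general (ω η : ℝ) (r : ℂ)
    (hroot : r ^ 2 - 2 * (ω + η * Complex.I) * r + 1 = 0)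
    (hr : 1 ≤ ‖r‖) :
    1 + η ≤ ‖r‖ := by
  have key := Complex.im_mul_sq_norm_sub_one_of_sq_sub_two_mul_add_one hroot
  simp only [Complex.add_im, Complex.ofReal_im, Complex.im_ofReal_mul, Complex.I_im, mul_one,
    zero_add] at key
  exact one_add_le_of_mul_sq_sub_one_eq hr (Complex.im_le_norm r) key

/-- For `ω ∈ ℝ`, `η > 0`, `w = ω + iη`, the root `r` of `z² − 2wz + 1 = 0` with
modulus at least `1` satisfies `|r| ≥ 1 + η`. -/
theorem pole_root_modulus_lower_bound (ω η : ℝ) (hη : 0 < η) (r : ℂ)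
    (hroot : r ^ 2 - 2 * (ω + η * Complex.I) * r + 1 = 0)
    (hr : 1 ≤ ‖r‖) :
    1 + η ≤ ‖r‖ :=
  pole_root_modulus_lower_bound_general ω η r hroot hr
end

section
/- Gap bound near the origin for clock-Hamiltonian eigenvalues: for M = 2T+1 with T even, cos(π(T−1)/M) − cos(πT/M) ≥ π/(2M). -/
/-!
Write the two angles as `m ∓ h` with `h = π / (2M)` and `m = π (2T - 1) / (2M)`, so that
the difference of cosines is `2 sin m sin h`. Jordan's inequality gives `sin h ≥ 1 / M`, and
for `T ≥ 2` the midpoint lies in `[3π/10, π/2]`, where `sin m ≥ sin (3π/10) = cos (π/5) > π/4`.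
-/

open Real

lemma Real.cos_sub_sub_cos_add (m h : ℝ) : cos (m - h) - cos (m + h) = 2 * sin m * sin h := by
  rw [cos_sub, cos_add]
  ring

lemma Real.inv_le_sin_pi_div_two_mul {M : ℝ} (hM : 1 ≤ M) : M⁻¹ ≤ sin (π / (2 * M)) := by
  have hM₀ : 0 < M := by linarith
  calc M⁻¹ = 2 / π * (π / (2 * M)) := by field_simp
    _ ≤ sin (π / (2 * M)) := by
      apply mul_le_sin (by positivity)
      exact div_le_div_of_nonneg_left pi_pos.le (by norm_num) (by linarith)

lemma Real.pi_div_four_lt_sin_three_pi_div_ten : π / 4 < sin (3 * π / 10) := by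
  have h_cos : sin (3 * π / 10) = cos (π / 5) := by
    rw [← cos_pi_div_two_sub]
    ring_nf
  have h_sqrt : (2.2 : ℝ) ≤ √5 := Real.le_sqrt_of_sq_le (by norm_num)
  rw [h_cos, cos_pi_div_five]
  linarith [pi_lt_d2]

lemma Real.pi_div_four_lt_sin_of_mem_Icc {x : ℝ} (hx : x ∈ Set.Icc (3 * π / 10) (π / 2)) :
    π / 4 < sin x :=
  pi_div_four_lt_sin_three_pi_div_ten.trans_le <|
    sin_le_sin_of_le_of_le_pi_div_two (by linarith [pi_pos]) hx.2 hx.1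

open Real in
theorem clock_eigenvalue_gap_general (T : ℕ) (hT : 2 ≤ T) :
    Real.cos (π * (T - 1) / (2 * T + 1)) - Real.cos (π * T / (2 * T + 1)) ≥
      π / (2 * (2 * T + 1)) := by
  have hT' : (2 : ℝ) ≤ T := by exact_mod_cast hT
  set M : ℝ := 2 * T + 1
  have hM : 0 < M := by positivity
  set h := π / (2 * M) with h_def
  set m := π * (2 * T - 1) / (2 * M) with m_def
  have h_lower : π * (T - 1) / M = m - h := by rw [m_def, h_def]; field_simp; ring
  have h_upper : π * T / M = m + h := by rw [m_def, h_def]; field_simp; ring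
  have h_mid : m ∈ Set.Icc (3 * π / 10) (π / 2) := by
    constructor
    · rw [div_le_div_iff₀ (by norm_num) (by positivity)]
      nlinarith [pi_pos]
    · rw [div_le_div_iff₀ (by positivity) (by norm_num)]
      nlinarith [pi_pos]
  have h_sin_m := pi_div_four_lt_sin_of_mem_Icc h_mid
  have h_sin_h : M⁻¹ ≤ sin h := inv_le_sin_pi_div_two_mul (by linarith)
  rw [h_lower, h_upper, cos_sub_sub_cos_add]
  calc π / (2 * M) = 2 * (π / 4) * M⁻¹ := by field_simp; ring
    _ ≤ 2 * sin m * sin h := by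
      gcongr
      linarith [pi_pos]

open Real in
/-- Gap bound near the origin for clock-Hamiltonian eigenvalues: for `M = 2T+1` with
`T ≥ 2` even, `cos(π(T−1)/M) − cos(πT/M) ≥ π/(2M)`. -/
theorem clock_eigenvalue_gap (T : ℕ) (hT : 2 ≤ T) (hTeven : Even T) :
    Real.cos (π * (T - 1) / (2 * T + 1)) - Real.cos (π * T / (2 * T + 1)) ≥
      π / (2 * (2 * T + 1)) :=
  clock_eigenvalue_gap_general T hT
end
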